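/- arXiv:alg-geom/9411013 — 2 statements merged into one kernel-verified Lean document; each statement's English description precedes it below -/
import Mathlib

section
/- (Lemma 2.3, Triangle Lemma) Let A, B, C be implication classes of an undirected graph G = (V,E) with A ≠ B and A ≠ C⁻¹, and suppose there are vertices a, b, c with (a,b) ∈ C, (a,c) ∈ B and (b,c) ∈ A. Then: (i) for every (b′,c′) ∈ A, one has (a,b′) ∈ C and (a,c′) ∈ B; (ii) if (b′,c′) ∈ A and (a′,b′) ∈ C, then (a′,c′) ∈ B; (iii) a ∉ Ã. -/
open Set

namespace TransOrient

variable {V : Type*}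

/-- `E` is the edge set of an undirected graph on the vertex type `V`:
an irreflexive and symmetric relation, given as a set of ordered pairs. -/
def IsGraph (E : Set (V × V)) : Prop :=
  (∀ a : V, (a, a) ∉ E) ∧ (∀ a b : V, (a, b) ∈ E ↔ (b, a) ∈ E)

/-- The forcing relation `Γ` on directed edges:
`(a,b) Γ (a',b')` iff (`a = a'` and `(b,b') ∉ E`) or (`b = b'` and `(a,a') ∉ E`). -/
def Gamma (E : Set (V × V)) (e e' : V × V) : Prop :=
  e ∈ E ∧ e' ∈ E ∧
    ((e.1 = e'.1 ∧ (e.2, e'.2) ∉ E) ∨ (e.2 = e'.2 ∧ (e.1, e'.1) ∉ E))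

/-- The implication classes of `G = (V,E)`: equivalence classes on `E` of
the reflexive-transitive closure of `Γ`. -/
def IsImplicationClass (E : Set (V × V)) (A : Set (V × V)) : Prop :=
  ∃ e ∈ E, A = {e' | Relation.ReflTransGen (Gamma E) e e'}

/-- `A⁻¹ = {(b,a) : (a,b) ∈ A}`. -/
def inv (A : Set (V × V)) : Set (V × V) := {p | (p.2, p.1) ∈ A}

/-- The color class `Â = A ∪ A⁻¹` of an implication class `A`. -/
def hat (A : Set (V × V)) : Set (V × V) := A ∪ inv A

/-- `Ã`: the set of vertices incident to an edge of `A`. -/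
def tilde (A : Set (V × V)) : Set V := {v | ∃ w, (v, w) ∈ A ∨ (w, v) ∈ A}

/-- A transitive orientation `E'` of a symmetric edge set `F`:
`E' ⊆ F`, `E' ∩ E'⁻¹ = ∅`, `E' ∪ E'⁻¹ = F` and `E'` is transitive. -/
def IsTransOrientation (F E' : Set (V × V)) : Prop :=
  E' ⊆ F ∧ E' ∩ inv E' = ∅ ∧ E' ∪ inv E' = F ∧
    ∀ a b c : V, (a, b) ∈ E' → (b, c) ∈ E' → (a, c) ∈ E'

/-- `G` is a comparability graph if `E` admits a transitive orientation. -/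
def IsComparability (E : Set (V × V)) : Prop :=
  ∃ E' : Set (V × V), IsTransOrientation E E'

/-- `E(X)`: the set of edges of `E` with both endpoints in `X`. -/
def edgesOn (E : Set (V × V)) (X : Set V) : Set (V × V) :=
  {p ∈ E | p.1 ∈ X ∧ p.2 ∈ X}

/-- `X` is a partitive set of `G = (V,E)`. -/
def IsPartitive (E : Set (V × V)) (X : Set V) : Prop :=
  ∀ a ∈ X, ∀ b ∈ X, ∀ c ∉ X, ((a, c) ∈ E ↔ (b, c) ∈ E)

/-- `X` is a "strong" partitive set of `G = (V,E)`. -/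
def IsStrongPartitive (E : Set (V × V)) (X : Set V) : Prop :=
  IsPartitive E X ∧
    ∀ Y : Set V, IsPartitive E Y → (Y ∩ X).Nonempty → X ⊆ Y ∨ Y ⊆ X

/-- `X` is a maximal "strong" partitive set of `G = (V,E)`: a strong partitive
set different from `V` which is maximal, for inclusion, among the strong
partitive sets different from `V`. -/
def IsMaxStrongPartitive (E : Set (V × V)) (X : Set V) : Prop :=
  IsStrongPartitive E X ∧ X ≠ Set.univ ∧
    ∀ Y : Set V, IsStrongPartitive E Y → Y ≠ Set.univ → X ⊆ Y → X = Y

/-- `X` is a partitive set of the induced subgraph `G(W) = (W, E(W))`. -/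
def IsPartitiveIn (E : Set (V × V)) (W : Set V) (X : Set V) : Prop :=
  X ⊆ W ∧ ∀ a ∈ X, ∀ b ∈ X, ∀ c ∈ W \ X,
    ((a, c) ∈ edgesOn E W ↔ (b, c) ∈ edgesOn E W)

/-- `X` is a "strong" partitive set of the induced subgraph `G(W)`. -/
def IsStrongPartitiveIn (E : Set (V × V)) (W : Set V) (X : Set V) : Prop :=
  IsPartitiveIn E W X ∧
    ∀ Y : Set V, IsPartitiveIn E W Y → (Y ∩ X).Nonempty → X ⊆ Y ∨ Y ⊆ X

/-- `X` is a maximal "strong" partitive set of the induced subgraph `G(W)`. -/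
def IsMaxStrongPartitiveIn (E : Set (V × V)) (W : Set V) (X : Set V) : Prop :=
  IsStrongPartitiveIn E W X ∧ X ≠ W ∧
    ∀ Y : Set V, IsStrongPartitiveIn E W Y → Y ≠ W → X ⊆ Y → X = Y

/-- Two directed edges lie in the same color class of `G = (V,E)`. -/
def SameColor (E : Set (V × V)) (e e' : V × V) : Prop :=
  ∃ A : Set (V × V), IsImplicationClass E A ∧ e ∈ hat A ∧ e' ∈ hat A

/-- A simplex of `G = (V,E)` given by its (finite, nonempty) vertex set `VS`:
a complete induced subgraph whose edges, for distinct unordered pairs,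
lie in distinct color classes of `G`. -/
def IsSimplex (E : Set (V × V)) (VS : Set V) : Prop :=
  VS.Finite ∧ VS.Nonempty ∧
    (∀ a ∈ VS, ∀ b ∈ VS, a ≠ b → (a, b) ∈ E) ∧
    (∀ a ∈ VS, ∀ b ∈ VS, ∀ c ∈ VS, ∀ d ∈ VS, a ≠ b → c ≠ d →
      SameColor E (a, b) (c, d) → (a = c ∧ b = d) ∨ (a = d ∧ b = c))

/-- The rank of a simplex on `r+1` vertices is `r`. -/
noncomputable def simplexRank (VS : Set V) : ℕ := VS.ncard - 1

/-- A maximal simplex: its vertex set is not properly contained in the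
vertex set of another simplex. -/
def IsMaxSimplex (E : Set (V × V)) (VS : Set V) : Prop :=
  IsSimplex E VS ∧ ∀ VS' : Set V, IsSimplex E VS' → VS ⊆ VS' → VS = VS'

/-- The multiplex `M(S)` generated by a simplex with vertex set `VS`:
the union of all color classes of `G` containing an edge of the simplex. -/
def multiplex (E : Set (V × V)) (VS : Set V) : Set (V × V) :=
  {e | ∃ A : Set (V × V), IsImplicationClass E A ∧ e ∈ hat A ∧
    ∃ a ∈ VS, ∃ b ∈ VS, a ≠ b ∧ (a, b) ∈ hat A}

/-- A maximal multiplex of `G`: a multiplex generated by a maximal simplex. -/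
def IsMaxMultiplex (E : Set (V × V)) (M : Set (V × V)) : Prop :=
  ∃ VS : Set V, IsMaxSimplex E VS ∧ M = multiplex E VS

/-- `P` is a partition of the set `W`. -/
def IsPartitionOf (W : Set V) (P : Set (Set V)) : Prop :=
  (∀ X ∈ P, X.Nonempty) ∧ ⋃₀ P = W ∧
    ∀ X ∈ P, ∀ Y ∈ P, X ≠ Y → X ∩ Y = ∅

/-- Adjacency in the quotient of the induced subgraph `G(W)` by a partition:
two distinct blocks are adjacent iff some pair of representatives is an
edge of `E(W)`. -/
def quotAdj (E : Set (V × V)) (W : Set V) (X Y : Set V) : Prop :=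
  X ≠ Y ∧ ∃ x ∈ X, ∃ y ∈ Y, (x, y) ∈ edgesOn E W

/-- A partitive set of an abstract graph with vertex set `W` and adjacency
relation `Adj`. -/
def IsPartitiveGen {α : Type*} (W : Set α) (Adj : α → α → Prop) (X : Set α) : Prop :=
  X ⊆ W ∧ ∀ a ∈ X, ∀ b ∈ X, ∀ c ∈ W \ X, (Adj a c ↔ Adj b c)

/-- An abstract graph `(W, Adj)` is indecomposable if all its partitive
sets are trivial. -/
def IndecomposableGen {α : Type*} (W : Set α) (Adj : α → α → Prop) : Prop :=
  ∀ X : Set α, IsPartitiveGen W Adj X → X.Subsingleton ∨ X = W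

/-- An isomorphism between the graphs `(Vα, Aα)` and `(Vβ, Aβ)`:
a bijection of the vertex sets preserving adjacency in both directions. -/
def GraphIso {α β : Type*} (Vα : Set α) (Aα : α → α → Prop)
    (Vβ : Set β) (Aβ : β → β → Prop) : Prop :=
  ∃ f : α → β, Set.BijOn f Vα Vβ ∧
    ∀ a ∈ Vα, ∀ b ∈ Vα, (Aα a b ↔ Aβ (f a) (f b))

/-- `(V', E')` is a subgraph of the induced subgraph `G(W)` of `G = (V,E)`. -/
def IsSubgraphOf (E : Set (V × V)) (W : Set V) (V' : Set V) (E' : Set (V × V)) : Prop :=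
  V' ⊆ W ∧ E' ⊆ edgesOn E W ∧ (∀ e ∈ E', e.1 ∈ V' ∧ e.2 ∈ V') ∧
    (∀ a b : V, (a, b) ∈ E' ↔ (b, a) ∈ E')

end TransOrient

/-! Seen from the apex `a`, the edges of `A` stay in the same two classes. A Γ-step moves
one endpoint of an `A`-edge to a vertex non-adjacent to the old one. If `a` is adjacent to
the new endpoint, the new apex edge is Γ-related to the old one; otherwise Γ carries the new
`A`-edge to one incident to `a`, which lies in `A ∩ C⁻¹` or in `A ∩ B` (`triangle_step`).
Part (ii) for `B ≠ C` is part (i) for the rotated triangle `c', a, b'`; for `B = C` the step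
argument is run along `C` instead of `A`. -/

namespace TransOrient

variable {V : Type*} {E A B C : Set (V × V)}

theorem gamma_symm (hG : IsGraph E) {e f : V × V} (h : Gamma E e f) : Gamma E f e := by
  obtain ⟨he, hf, ⟨h₁, h₂⟩ | ⟨h₁, h₂⟩⟩ := h
  · exact ⟨hf, he, .inl ⟨h₁.symm, fun h => h₂ ((hG.2 _ _).1 h)⟩⟩
  · exact ⟨hf, he, .inr ⟨h₁.symm, fun h => h₂ ((hG.2 _ _).1 h)⟩⟩

theorem gamma_swap (hG : IsGraph E) {e f : V × V} (h : Gamma E e f) :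
    Gamma E e.swap f.swap := by
  obtain ⟨he, hf, h | h⟩ := h
  · exact ⟨(hG.2 _ _).1 he, (hG.2 _ _).1 hf, .inr h⟩
  · exact ⟨(hG.2 _ _).1 he, (hG.2 _ _).1 hf, .inl h⟩

theorem reflTransGen_gamma_swap (hG : IsGraph E) {e f : V × V}
    (h : Relation.ReflTransGen (Gamma E) e f) :
    Relation.ReflTransGen (Gamma E) e.swap f.swap := by
  induction h with
  | refl => exact .refl
  | tail _ hγ ih => exact ih.tail (gamma_swap hG hγ)

theorem inv_injective : Function.Injective (inv : Set (V × V) → Set (V × V)) :=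
  fun A B h => by ext ⟨p, q⟩; exact Set.ext_iff.1 h (q, p)

namespace IsImplicationClass

theorem subset (hA : IsImplicationClass E A) : A ⊆ E := by
  obtain ⟨e₀, he₀, rfl⟩ := hA
  intro e he
  induction he with
  | refl => exact he₀
  | tail _ hγ _ => exact hγ.2.1

theorem mem_of_reflTransGen (hA : IsImplicationClass E A) {e f : V × V} (he : e ∈ A)
    (h : Relation.ReflTransGen (Gamma E) e f) : f ∈ A := by
  obtain ⟨e₀, -, rfl⟩ := hA
  exact Relation.ReflTransGen.trans he h

theorem mem_of_gamma (hA : IsImplicationClass E A) {e f : V × V} (he : e ∈ A)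
    (hγ : Gamma E e f) : f ∈ A :=
  hA.mem_of_reflTransGen he (.single hγ)

theorem reflTransGen (hG : IsGraph E) (hA : IsImplicationClass E A) {e f : V × V}
    (he : e ∈ A) (hf : f ∈ A) : Relation.ReflTransGen (Gamma E) e f := by
  obtain ⟨e₀, -, rfl⟩ := hA
  have : Std.Symm (Gamma E) := ⟨fun _ _ => gamma_symm hG⟩
  exact (Relation.ReflTransGen.stdSymm.symm _ _ he).trans hf

theorem eq_of_mem (hG : IsGraph E) (hA : IsImplicationClass E A)
    (hB : IsImplicationClass E B) {e : V × V} (heA : e ∈ A) (heB : e ∈ B) : A = B := by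
  ext f
  exact ⟨fun hf => hB.mem_of_reflTransGen heB (hA.reflTransGen hG heA hf),
    fun hf => hA.mem_of_reflTransGen heA (hB.reflTransGen hG heB hf)⟩

theorem inv (hG : IsGraph E) (hC : IsImplicationClass E C) :
    IsImplicationClass E (inv C) := by
  obtain ⟨e₀, he₀, rfl⟩ := hC
  refine ⟨e₀.swap, (hG.2 _ _).1 he₀, ?_⟩
  ext ⟨p, q⟩
  exact ⟨reflTransGen_gamma_swap hG, reflTransGen_gamma_swap hG⟩

theorem eq_inv_of_mem (hG : IsGraph E) (hA : IsImplicationClass E A)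
    (hC : IsImplicationClass E C) {u w : V} (h : (u, w) ∈ A) (h' : (w, u) ∈ C) :
    A = TransOrient.inv C :=
  hA.eq_of_mem hG (hC.inv hG) h h'

theorem mem_of_fst_eq (hA : IsImplicationClass E A) {u v w : V} (h : (u, v) ∈ A)
    (huw : (u, w) ∈ E) (hvw : (v, w) ∉ E) : (u, w) ∈ A :=
  hA.mem_of_gamma h ⟨hA.subset h, huw, .inl ⟨rfl, hvw⟩⟩

theorem mem_of_snd_eq (hA : IsImplicationClass E A) {u v w : V} (h : (u, v) ∈ A)
    (hwv : (w, v) ∈ E) (huw : (u, w) ∉ E) : (w, v) ∈ A :=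
  hA.mem_of_gamma h ⟨hA.subset h, hwv, .inr ⟨rfl, huw⟩⟩

theorem induction (hG : IsGraph E) (hA : IsImplicationClass E A) {P : V × V → Prop}
    {e f : V × V} (he : e ∈ A) (hf : f ∈ A) (hPe : P e)
    (step : ∀ x y, x ∈ A → y ∈ A → Gamma E x y → P x → P y) : P f := by
  have hef := hA.reflTransGen hG he hf
  clear hf
  induction hef with
  | refl => exact hPe
  | tail hex hγ ih =>
    exact step _ _ (hA.mem_of_reflTransGen he hex) (hA.mem_of_reflTransGen he (hex.tail hγ)) hγ ih

end IsImplicationClass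

theorem triangle_step (hG : IsGraph E) (hA : IsImplicationClass E A)
    (hB : IsImplicationClass E B) (hC : IsImplicationClass E C) (hAC : A ≠ inv C)
    {a p q q' : V} (hpq' : (p, q') ∈ A) (hap : (a, p) ∈ C) (haq : (a, q) ∈ B)
    (hqq' : (q, q') ∉ E) : (a, q') ∈ B := by
  by_cases haq' : (a, q') ∈ E
  · exact hB.mem_of_fst_eq haq haq' hqq'
  · have hpa : (p, a) ∈ A := hA.mem_of_fst_eq hpq' ((hG.2 _ _).1 (hC.subset hap))
      fun h => haq' ((hG.2 _ _).1 h)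
    exact absurd (hA.eq_inv_of_mem hG hC hpa hap) hAC

theorem apex_mem_of_triangle (hG : IsGraph E) (hA : IsImplicationClass E A)
    (hB : IsImplicationClass E B) (hC : IsImplicationClass E C)
    (hAB : A ≠ B) (hAC : A ≠ inv C) {a b c : V}
    (habC : (a, b) ∈ C) (hacB : (a, c) ∈ B) (hbcA : (b, c) ∈ A)
    {b' c' : V} (hb'c' : (b', c') ∈ A) : (a, b') ∈ C ∧ (a, c') ∈ B := by
  refine hA.induction hG (P := fun e => (a, e.1) ∈ C ∧ (a, e.2) ∈ B) hbcA hb'c'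
    ⟨habC, hacB⟩ ?_
  rintro ⟨p, q⟩ ⟨p', q'⟩ - hpq' ⟨-, -, ⟨rfl, hqq'⟩ | ⟨rfl, hpp'⟩⟩ ⟨hap, haq⟩
  · exact ⟨hap, triangle_step hG hA hB hC hAC hpq' hap haq hqq'⟩
  · exact ⟨triangle_step hG (hA.inv hG) hC hB (fun h => hAB (inv_injective h))
      hpq' haq hap hpp', haq⟩

theorem triangle_transfer (hG : IsGraph E) (hA : IsImplicationClass E A)
    (hC : IsImplicationClass E C) (hAC : A ≠ inv C) {x y x' y' : V}
    (hxy : (x, y) ∈ C) (hx'y' : (x', y') ∈ C) (h : ∀ z, (y, z) ∈ A → (x, z) ∈ C) :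
    ∀ z, (y', z) ∈ A → (x', z) ∈ C := by
  refine hC.induction hG (P := fun e => ∀ z, (e.2, z) ∈ A → (e.1, z) ∈ C) hxy hx'y' h ?_
  rintro ⟨x, y⟩ ⟨x', y'⟩ hxy hxy' ⟨-, -, ⟨rfl, hyy'⟩ | ⟨rfl, hxx'⟩⟩ h z hyz
  · by_cases hyz' : (y, z) ∈ E
    · exact h z (hA.mem_of_snd_eq hyz hyz' fun h => hyy' ((hG.2 _ _).1 h))
    · exact triangle_step hG hA hC hC hAC hyz hxy' hxy hyz'
  · exact triangle_step hG (hC.inv hG) (hC.inv hG) (hA.inv hG) (fun h => hAC h.symm)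
      hxy' hyz (h z hyz) hxx'

theorem mem_of_triangle (hG : IsGraph E) (hA : IsImplicationClass E A)
    (hB : IsImplicationClass E B) (hC : IsImplicationClass E C)
    (hAB : A ≠ B) (hAC : A ≠ inv C) {a b c : V}
    (habC : (a, b) ∈ C) (hacB : (a, c) ∈ B) (hbcA : (b, c) ∈ A)
    {a' b' c' : V} (hb'c' : (b', c') ∈ A) (ha'b' : (a', b') ∈ C) : (a', c') ∈ B := by
  have apex {b' c' : V} (h : (b', c') ∈ A) : (a, b') ∈ C ∧ (a, c') ∈ B :=
    apex_mem_of_triangle hG hA hB hC hAB hAC habC hacB hbcA h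
  obtain ⟨hab', hac'⟩ := apex hb'c'
  rcases eq_or_ne B C with rfl | hBC
  · exact triangle_transfer hG hA hB hAC hab' ha'b' (fun z hz => (apex hz).2) c' hb'c'
  · exact (apex_mem_of_triangle hG hC (hA.inv hG) (hB.inv hG) (fun h => hAC (by rw [h]; rfl))
      (fun h => hBC h.symm) hac' hb'c' hab' ha'b').1

end TransOrient

open TransOrient in
/-- **(Lemma 2.3, Triangle Lemma)** -/
theorem triangle_lemma
    {V : Type*} (E : Set (V × V)) (hG : IsGraph E)
    (A B C : Set (V × V))
    (hA : IsImplicationClass E A) (hB : IsImplicationClass E B)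
    (hC : IsImplicationClass E C)
    (hAB : A ≠ B) (hAC : A ≠ inv C)
    (a b c : V) (habC : (a, b) ∈ C) (hacB : (a, c) ∈ B) (hbcA : (b, c) ∈ A) :
    (∀ b' c' : V, (b', c') ∈ A → (a, b') ∈ C ∧ (a, c') ∈ B) ∧
    (∀ a' b' c' : V, (b', c') ∈ A → (a', b') ∈ C → (a', c') ∈ B) ∧
    a ∉ tilde A := by
  have apex (b' c' : V) (h : (b', c') ∈ A) : (a, b') ∈ C ∧ (a, c') ∈ B :=
    apex_mem_of_triangle hG hA hB hC hAB hAC habC hacB hbcA h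
  refine ⟨apex, fun a' b' c' => mem_of_triangle hG hA hB hC hAB hAC habC hacB hbcA, ?_⟩
  rintro ⟨w, haw | hwa⟩
  · exact hG.1 a (hC.subset (apex a w haw).1)
  · exact hG.1 a (hB.subset (apex w a hwa).2)
end

section
/- (Proposition 2.5) Let X be a partitive set of an undirected graph G = (V,E) and let Â be a color class of G such that E(X) ∩ Â ≠ ∅. Then Â ⊆ E(X). -/
open Set

namespace TransOrient

variable {V : Type*}

section ColorClass

variable {E : Set (V × V)} (hsymm : ∀ a b : V, (a, b) ∈ E → (b, a) ∈ E)
include hsymm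

theorem Gamma.symm {e e' : V × V} (h : Gamma E e e') : Gamma E e' e := by
  obtain ⟨he, he', ⟨h₁, h₂⟩ | ⟨h₁, h₂⟩⟩ := h
  · exact ⟨he', he, .inl ⟨h₁.symm, fun h => h₂ (hsymm _ _ h)⟩⟩
  · exact ⟨he', he, .inr ⟨h₁.symm, fun h => h₂ (hsymm _ _ h)⟩⟩

theorem swap_mem_edgesOn {X : Set V} {p : V × V} (hp : p ∈ edgesOn E X) :
    p.swap ∈ edgesOn E X :=
  ⟨hsymm _ _ hp.1, hp.2.2, hp.2.1⟩

variable {X : Set V} (hX : IsPartitive E X)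
include hX

/-- A `Γ`-step keeps the common endpoint and replaces the other by a vertex that is
non-adjacent to it; partitivity of `X` forbids that vertex from leaving `X`. -/
theorem IsPartitive.gamma_mem_edgesOn {e e' : V × V} (h : Gamma E e e')
    (he : e ∈ edgesOn E X) : e' ∈ edgesOn E X := by
  obtain ⟨-, ha, hb⟩ := he
  obtain ⟨-, he', ⟨h₁, h₂⟩ | ⟨h₂, h₁⟩⟩ := h
  · refine ⟨he', h₁ ▸ ha, by_contra fun hc => h₂ ?_⟩
    exact (hX _ hb _ ha _ hc).mpr (h₁ ▸ he')
  · refine ⟨he', by_contra fun hc => h₁ ?_, h₂ ▸ hb⟩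
    exact (hX _ ha _ hb _ hc).mpr (hsymm _ _ (h₂ ▸ he'))

theorem IsPartitive.mem_edgesOn_iff_of_reflTransGen {e e' : V × V}
    (h : Relation.ReflTransGen (Gamma E) e e') :
    e ∈ edgesOn E X ↔ e' ∈ edgesOn E X := by
  induction h with
  | refl => rfl
  | tail _ hstep ih =>
    exact ih.trans ⟨hX.gamma_mem_edgesOn hsymm hstep,
      hX.gamma_mem_edgesOn hsymm (hstep.symm hsymm)⟩

theorem IsImplicationClass.subset_edgesOn {A : Set (V × V)} (hA : IsImplicationClass E A)
    (hne : (edgesOn E X ∩ A).Nonempty) : A ⊆ edgesOn E X := by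
  obtain ⟨e₀, -, rfl⟩ := hA
  obtain ⟨f, hfX, hf⟩ := hne
  have he₀ : e₀ ∈ edgesOn E X := (hX.mem_edgesOn_iff_of_reflTransGen hsymm hf).mpr hfX
  exact fun e he => (hX.mem_edgesOn_iff_of_reflTransGen hsymm he).mp he₀

end ColorClass

end TransOrient
open TransOrient in
/-- **(Proposition 2.5)** If `X` is a partitive set and `Â` a color class with
`E(X) ∩ Â ≠ ∅`, then `Â ⊆ E(X)`. -/
theorem color_class_subset_of_meets_partitive
    {V : Type*} (E : Set (V × V)) (hG : IsGraph E)
    (X : Set V) (hX : IsPartitive E X)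
    (A : Set (V × V)) (hA : IsImplicationClass E A)
    (hne : (edgesOn E X ∩ hat A).Nonempty) :
    hat A ⊆ edgesOn E X := by
  have hsymm : ∀ a b : V, (a, b) ∈ E → (b, a) ∈ E := fun a b => (hG.2 a b).mp
  have hA_sub : A ⊆ edgesOn E X := by
    refine hA.subset_edgesOn hsymm hX ?_
    obtain ⟨f, hfX, hf | hf⟩ := hne
    · exact ⟨f, hfX, hf⟩
    · exact ⟨f.swap, swap_mem_edgesOn hsymm hfX, hf⟩
  rintro e (he | he)
  · exact hA_sub he
  · exact swap_mem_edgesOn hsymm (hA_sub he)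
end
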